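/- arXiv:1207.1958 — 5 statements merged into one kernel-verified Lean document; each statement's English description precedes it below -/
import Mathlib

section
/- Let α, β be complex numbers with |α|² + |β|² = 1, written as α = cos(θ)e^{iα₁}, β = sin(θ)e^{iβ₁} with θ ∈ [0, π/2]. If φ = α₁ − β₁ − π and rt = π/2 − θ for some reals r, t, then the first component of exp(tM)·(α, β)ᵀ is zero, where M = ((0, r·e^{iφ}), (−r·e^{−iφ}, 0)). In particular exp(tM)·(α, β)ᵀ is collinear to (0, 1)ᵀ. -/
/-!
Since `K = !![0, e^{iφ}; -e^{-iφ}, 0]` squares to `-1`, the map `a + b i ↦ a + b K` is a continuous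
`ℝ`-algebra map `ℂ → M₂(ℂ)`, so it commutes with `exp` and `exp (s K) = cos s + sin s K`. With
`s = r t = π/2 - θ` the first component of `exp (s K) (α, β)ᵀ` is
`sin θ cos θ (e^{iα₁} + e^{i(φ + β₁)})`, which vanishes because `φ + β₁ = α₁ - π`.
-/

open Complex Real NormedSpace

theorem NormedSpace.exp_smul_of_mul_self_eq_neg_one {A : Type*} [NormedRing A] [NormedAlgebra ℝ A]
    {J : A} (hJ : J * J = -1) (s : ℝ) :
    exp (s • J) = algebraMap ℝ A (Real.cos s) + Real.sin s • J := by
  let f := Complex.liftAux J hJ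
  have hf : Continuous f := f.toLinearMap.continuous_of_finiteDimensional
  have hsJ : s • J = f (s * I) := by simp [f, liftAux_apply]
  rw [hsJ, ← map_exp_of_mem_ball (𝕂 := ℝ) f hf _ (by simp [expSeries_radius_eq_top]),
    ← Complex.exp_eq_exp_ℂ, liftAux_apply, exp_ofReal_mul_I_re, exp_ofReal_mul_I_im]

theorem Matrix.exp_smul_of_mul_self_eq_neg_one {n : Type*} [Fintype n] [DecidableEq n]
    {J : Matrix n n ℂ} (hJ : J * J = -1) (s : ℝ) :
    exp (s • J) = algebraMap ℝ _ (Real.cos s) + Real.sin s • J := by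
  -- `exp` depends only on the topology, which the operator norm induces.
  let := Matrix.linftyOpNormedRing (n := n) (α := ℂ)
  let := Matrix.linftyOpNormedAlgebra (R := ℝ) (n := n) (α := ℂ)
  exact NormedSpace.exp_smul_of_mul_self_eq_neg_one hJ s

noncomputable def skewGenerator (φ : ℝ) : Matrix (Fin 2) (Fin 2) ℂ :=
  !![0, Complex.exp (φ * I); -Complex.exp (-φ * I), 0]

theorem skewGenerator_mul_self (φ : ℝ) : skewGenerator φ * skewGenerator φ = -1 := by
  ext i j
  fin_cases i <;> fin_cases j <;> simp [skewGenerator, Matrix.mul_apply, Complex.exp_neg]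

theorem smul_eq_smul_skewGenerator (r t φ : ℝ) :
    (t : ℂ) • (!![0, (r : ℂ) * Complex.exp (φ * I); -(r : ℂ) * Complex.exp (-(φ : ℂ) * I), 0] :
      Matrix (Fin 2) (Fin 2) ℂ) = (r * t) • skewGenerator φ := by
  ext i j
  fin_cases i <;> fin_cases j <;> simp [skewGenerator, Complex.real_smul] <;> ring

theorem exp_smul_skewGenerator_mulVec_zero (s φ : ℝ) (v : Fin 2 → ℂ) :
    (exp (s • skewGenerator φ)).mulVec v 0 =
      Real.cos s * v 0 + Real.sin s * Complex.exp (φ * I) * v 1 := by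
  rw [Matrix.exp_smul_of_mul_self_eq_neg_one (skewGenerator_mul_self φ)]
  simp [Matrix.mulVec, dotProduct, skewGenerator, Matrix.algebraMap_matrix_apply,
    Complex.real_smul, mul_assoc]

theorem exists_eq_smul_of_apply_zero_eq_zero {R : Type*} [MulZeroOneClass R] {v : Fin 2 → R}
    (hv : v 0 = 0) : ∃ c : R, v = c • ![0, 1] :=
  ⟨v 1, by ext i; fin_cases i <;> simp [hv]⟩

theorem exp_steers_to_second_basis_vector_general (θ α₁ β₁ r t φ : ℝ)
    (hφ : φ = α₁ - β₁ - π) (hrt : r * t = π / 2 - θ) :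
    (NormedSpace.exp ((t : ℂ) •
          (!![0, (r : ℂ) * Complex.exp (φ * Complex.I);
              -(r : ℂ) * Complex.exp (-(φ : ℂ) * Complex.I), 0] :
            Matrix (Fin 2) (Fin 2) ℂ))).mulVec
        ![(Real.cos θ : ℂ) * Complex.exp (α₁ * Complex.I),
          (Real.sin θ : ℂ) * Complex.exp (β₁ * Complex.I)] 0 = 0 ∧
      ∃ c : ℂ,
        (NormedSpace.exp ((t : ℂ) •
              (!![0, (r : ℂ) * Complex.exp (φ * Complex.I);
                  -(r : ℂ) * Complex.exp (-(φ : ℂ) * Complex.I), 0] :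
                Matrix (Fin 2) (Fin 2) ℂ))).mulVec
            ![(Real.cos θ : ℂ) * Complex.exp (α₁ * Complex.I),
              (Real.sin θ : ℂ) * Complex.exp (β₁ * Complex.I)] = c • ![0, 1] := by
  refine (fun h₀ ↦ ⟨h₀, exists_eq_smul_of_apply_zero_eq_zero h₀⟩) ?_
  have hphase : Complex.exp (φ * I) * Complex.exp (β₁ * I) = -Complex.exp (α₁ * I) := by
    rw [← Complex.exp_add, hφ, show ((α₁ - β₁ - π : ℝ) : ℂ) * I + β₁ * I = α₁ * I - π * I by
      push_cast; ring, Complex.exp_sub, Complex.exp_pi_mul_I, div_neg, div_one]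
  rw [smul_eq_smul_skewGenerator, exp_smul_skewGenerator_mulVec_zero, hrt,
    Real.cos_pi_div_two_sub, Real.sin_pi_div_two_sub]
  simp only [Matrix.cons_val_zero, Matrix.cons_val_one]
  linear_combination (Real.sin θ * Real.cos θ : ℂ) * hphase

/-- Let `α = cos θ e^{iα₁}`, `β = sin θ e^{iβ₁}` with `θ ∈ [0, π/2]` (so `|α|² + |β|² = 1`).
If `φ = α₁ - β₁ - π` and `r t = π/2 - θ`, then the first component of
`exp(tM) (α, β)ᵀ` vanishes, where `M = [[0, r e^{iφ}], [-r e^{-iφ}, 0]]`; in particular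
`exp(tM) (α, β)ᵀ` is collinear to `(0, 1)ᵀ`. -/
theorem exp_steers_to_second_basis_vector (θ α₁ β₁ r t φ : ℝ)
    (hθ : θ ∈ Set.Icc 0 (π / 2))
    (hφ : φ = α₁ - β₁ - π) (hrt : r * t = π / 2 - θ) :
    (NormedSpace.exp ((t : ℂ) •
          (!![0, (r : ℂ) * Complex.exp (φ * Complex.I);
              -(r : ℂ) * Complex.exp (-(φ : ℂ) * Complex.I), 0] :
            Matrix (Fin 2) (Fin 2) ℂ))).mulVec
        ![(Real.cos θ : ℂ) * Complex.exp (α₁ * Complex.I),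
          (Real.sin θ : ℂ) * Complex.exp (β₁ * Complex.I)] 0 = 0 ∧
      ∃ c : ℂ,
        (NormedSpace.exp ((t : ℂ) •
              (!![0, (r : ℂ) * Complex.exp (φ * Complex.I);
                  -(r : ℂ) * Complex.exp (-(φ : ℂ) * Complex.I), 0] :
                Matrix (Fin 2) (Fin 2) ℂ))).mulVec
            ![(Real.cos θ : ℂ) * Complex.exp (α₁ * Complex.I),
              (Real.sin θ : ℂ) * Complex.exp (β₁ * Complex.I)] = c • ![0, 1] :=
  exp_steers_to_second_basis_vector_general θ α₁ β₁ r t φ hφ hrt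
end

section
/- If a measure space Ω admits two disjoint measurable sets of positive finite measure, then for every unit vector ψ₀ ∈ L²(Ω, ℂ) and every essentially bounded real-valued g, the closure of the orbit {e^{iKg}·ψ₀ : K ∈ ℝ} is a proper subset of the unit sphere of L²(Ω, ℂ). -/
/-!
Multiplication by a unimodular function does not change the pointwise modulus, and equality of
moduli a.e. passes to L²-limits (along an a.e. convergent subsequence). So every element of the
orbit closure has modulus `|ψ₀|` a.e. The normalized indicators of two disjoint sets of positive
finite measure lie on the unit sphere but cannot both have modulus `|ψ₀|`: otherwise each would
vanish a.e. on its own support.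
-/

open MeasureTheory Complex Filter

theorem Complex.norm_exp_I_mul_ofReal_mul_ofReal (a b : ℝ) : ‖exp (I * a * b)‖ = 1 := by
  rw [mul_assoc, ← ofReal_mul, norm_exp_I_mul_ofReal]

namespace MeasureTheory.Lp

variable {Ω E : Type*} [MeasurableSpace Ω] {μ : Measure Ω} [NormedAddCommGroup E] {p : ENNReal}

theorem norm_eq_of_norm_ae_eq {ψ φ : Lp E p μ}
    (h : (fun x => ‖ψ x‖) =ᵐ[μ] fun x => ‖φ x‖) : ‖ψ‖ = ‖φ‖ := by
  rw [Lp.norm_def, Lp.norm_def, eLpNorm_congr_norm_ae h]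

variable [Fact (1 ≤ p)]

theorem isClosed_setOf_norm_ae_eq (f : Ω → ℝ) :
    IsClosed {ψ : Lp E p μ | (fun x => ‖ψ x‖) =ᵐ[μ] f} := by
  refine IsSeqClosed.isClosed fun φ ψ hφ hlim => ?_
  obtain ⟨ns, -, hns⟩ := (tendstoInMeasure_of_tendsto_Lp hlim).exists_seq_tendsto_ae
  have hall : ∀ᵐ x ∂μ, ∀ n, ‖φ n x‖ = f x := ae_all_iff.2 hφ
  filter_upwards [hns, hall] with x hx hxf
  refine tendsto_nhds_unique hx.norm ?_
  simp only [hxf, tendsto_const_nhds]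

theorem exists_norm_eq_one_ae_eq_zero_off [NormedSpace ℝ E] [Nontrivial E] {s : Set Ω}
    (hs : MeasurableSet s) (hs0 : μ s ≠ 0) (hsfin : μ s ≠ ⊤) :
    ∃ φ : Lp E p μ, ‖φ‖ = 1 ∧ ∀ᵐ x ∂μ, x ∉ s → φ x = 0 := by
  obtain ⟨e, he⟩ := exists_norm_eq E zero_le_one
  have hr : 0 < μ.real s ^ (1 / p.toReal) :=
    Real.rpow_pos_of_pos (ENNReal.toReal_pos hs0 hsfin) _
  refine ⟨indicatorConstLp p hs hsfin ((μ.real s ^ (1 / p.toReal))⁻¹ • e), ?_, ?_⟩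
  · rw [norm_indicatorConstLp' (zero_lt_one.trans_le Fact.out).ne' hs0, norm_smul, he, mul_one,
      Real.norm_of_nonneg (inv_nonneg.2 hr.le), inv_mul_cancel₀ hr.ne']
  · exact indicatorConstLp_coeFn_notMem

theorem exists_norm_eq_one_not_norm_ae_eq [NormedSpace ℝ E] [Nontrivial E] {s t : Set Ω}
    (hs : MeasurableSet s) (ht : MeasurableSet t) (hst : Disjoint s t)
    (hs0 : μ s ≠ 0) (hsfin : μ s ≠ ⊤) (ht0 : μ t ≠ 0) (htfin : μ t ≠ ⊤) (f : Ω → ℝ) :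
    ∃ φ : Lp E p μ, ‖φ‖ = 1 ∧ ¬(fun x => ‖φ x‖) =ᵐ[μ] f := by
  obtain ⟨φs, hφs, hφs0⟩ := exists_norm_eq_one_ae_eq_zero_off (E := E) (p := p) hs hs0 hsfin
  obtain ⟨φt, hφt, hφt0⟩ := exists_norm_eq_one_ae_eq_zero_off (E := E) (p := p) ht ht0 htfin
  by_contra! h
  have hφs_zero : ⇑φs =ᵐ[μ] 0 := by
    filter_upwards [h φs hφs, h φt hφt, hφs0, hφt0] with x hfs hft hs' ht'
    by_cases hxs : x ∈ s
    · have hφtx : φt x = 0 := ht' (Set.disjoint_left.mp hst hxs)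
      rw [Pi.zero_apply, ← norm_eq_zero, hfs, ← hft, hφtx, _root_.norm_zero]
    · exact hs' hxs
  rw [(Lp.eq_zero_iff_ae_eq_zero).2 hφs_zero, norm_zero] at hφs
  exact zero_ne_one hφs

end MeasureTheory.Lp

theorem orbit_closure_proper_subset_of_sphere_general {Ω : Type*} [MeasurableSpace Ω] (μ : Measure Ω)
    (s t : Set Ω) (hs : MeasurableSet s) (ht : MeasurableSet t) (hst : Disjoint s t)
    (hs0 : 0 < μ s) (hsfin : μ s < ⊤) (ht0 : 0 < μ t) (htfin : μ t < ⊤)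
    (g : Ω → ℝ) (ψ₀ : Lp ℂ 2 μ) (hψ₀ : ‖ψ₀‖ = 1) :
    closure {ψ : Lp ℂ 2 μ | ∃ K : ℝ,
        ⇑ψ =ᵐ[μ] fun x => Complex.exp (Complex.I * K * g x) * ψ₀ x} ⊂
      Metric.sphere (0 : Lp ℂ 2 μ) 1 := by
  set M := {ψ : Lp ℂ 2 μ | (fun x => ‖ψ x‖) =ᵐ[μ] fun x => ‖ψ₀ x‖}
  have horbit_sub : {ψ : Lp ℂ 2 μ | ∃ K : ℝ,
      ⇑ψ =ᵐ[μ] fun x => Complex.exp (Complex.I * K * g x) * ψ₀ x} ⊆ M := by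
    rintro ψ ⟨K, hK⟩
    filter_upwards [hK] with x hx
    rw [hx, norm_mul, norm_exp_I_mul_ofReal_mul_ofReal, one_mul]
  have hclosure_sub : closure _ ⊆ M := closure_minimal horbit_sub (Lp.isClosed_setOf_norm_ae_eq _)
  have hM_sub : M ⊆ Metric.sphere 0 1 := fun ψ hψ => by
    rw [mem_sphere_zero_iff_norm, ← hψ₀]
    exact Lp.norm_eq_of_norm_ae_eq hψ
  obtain ⟨φ, hφ, hφM⟩ := Lp.exists_norm_eq_one_not_norm_ae_eq (E := ℂ) (p := 2) hs ht hst
    hs0.ne' hsfin.ne ht0.ne' htfin.ne fun x => ‖ψ₀ x‖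
  exact (Set.ssubset_iff_of_subset (hclosure_sub.trans hM_sub)).2
    ⟨φ, mem_sphere_zero_iff_norm.2 hφ, fun hφ' => hφM (hclosure_sub hφ')⟩

/-- If `Ω` admits two disjoint measurable sets of positive finite measure, then for every unit
vector `ψ₀ ∈ L²(Ω, ℂ)` and every essentially bounded measurable real `g`, the closure of the
orbit `{e^{iKg} ψ₀ : K ∈ ℝ}` is a proper subset of the unit sphere of `L²(Ω, ℂ)`. -/
theorem orbit_closure_proper_subset_of_sphere {Ω : Type*} [MeasurableSpace Ω] (μ : Measure Ω)
    (s t : Set Ω) (hs : MeasurableSet s) (ht : MeasurableSet t) (hst : Disjoint s t)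
    (hs0 : 0 < μ s) (hsfin : μ s < ⊤) (ht0 : 0 < μ t) (htfin : μ t < ⊤)
    (g : Ω → ℝ) (hg : Measurable g) (hg_bdd : ∃ C : ℝ, ∀ᵐ x ∂μ, |g x| ≤ C)
    (ψ₀ : Lp ℂ 2 μ) (hψ₀ : ‖ψ₀‖ = 1) :
    closure {ψ : Lp ℂ 2 μ | ∃ K : ℝ,
        ⇑ψ =ᵐ[μ] fun x => Complex.exp (Complex.I * K * g x) * ψ₀ x} ⊂
      Metric.sphere (0 : Lp ℂ 2 μ) 1 :=
  orbit_closure_proper_subset_of_sphere_general μ s t hs ht hst hs0 hsfin ht0 htfin g ψ₀ hψ₀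
end

section
/- Let A be a bounded skew-adjoint operator on a Hilbert space H, B a bounded skew-adjoint operator, u a piecewise constant real function, and let Υ_t be the propagator of ψ' = (A + u(t)B)ψ. Define Y_t = e^{−(∫₀ᵗ u)B} ∘ Υ_t. Then for every unit vector ψ₀ and every fixed vector φ, the function t ↦ ⟨φ, Y_t ψ₀⟩ is Lipschitz with Lipschitz constant at most ‖A‖·‖φ‖. -/
open Complex NormedSpace intervalIntegral

/-!
Conjugating by `e^{-(∫₀ᵗ u) B}` removes the control term: wherever `u` is locally constant,
`Y_t ψ₀ = e^{-(∫₀ᵗ u) B} Υ_t ψ₀` has derivative `e^{-(∫₀ᵗ u) B} A Υ_t ψ₀`, whose norm is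
`‖A Υ_t ψ₀‖ ≤ ‖A‖` since `e^{sB}` (for skew-adjoint `B`) and `Υ_t` are isometries. So the
observable `t ↦ ⟨φ, Y_t ψ₀⟩` is continuous with derivative bounded by `‖A‖ ‖φ‖` off the finite
set of switching times, and the mean value theorem between consecutive switching times gives the
Lipschitz bound.
-/

open Set Filter Topology MeasureTheory

theorem norm_sub_le_of_hasDerivAt_off_finite {F : Type*} [NormedAddCommGroup F]
    [NormedSpace ℝ F] {f f' : ℝ → F} {C : NNReal} {D : Set ℝ} (hD : D.Finite) {a b : ℝ}
    (hab : a ≤ b) (hf : ContinuousOn f (Icc a b))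
    (hderiv : ∀ t ∈ Ioo a b \ D, HasDerivAt f (f' t) t)
    (hbound : ∀ t ∈ Ioo a b \ D, ‖f' t‖₊ ≤ C) :
    ‖f b - f a‖ ≤ C * (b - a) := by
  induction D, hD using Set.Finite.induction_on generalizing a b with
  | empty =>
    rcases hab.eq_or_lt with rfl | hlt
    · simp
    have hlip : LipschitzOnWith C f (Ioo a b) :=
      (convex_Ioo a b).lipschitzOnWith_of_nnnorm_hasDerivWithin_le
        (fun t ht => (hderiv t ⟨ht, notMem_empty t⟩).hasDerivWithinAt)
        (fun t ht => hbound t ⟨ht, notMem_empty t⟩)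
    have hIcc : LipschitzOnWith C f (Icc a b) :=
      closure_Ioo hlt.ne ▸ hlip.closure (closure_Ioo hlt.ne ▸ hf)
    simpa [dist_eq_norm, Real.dist_eq, abs_of_nonneg (sub_nonneg.2 hab)] using
      hIcc.dist_le_mul b (right_mem_Icc.2 hab) a (left_mem_Icc.2 hab)
  | @insert d D _ hD ih =>
    have ih' : ∀ {a' b'}, a ≤ a' → b' ≤ b → a' ≤ b' → d ∉ Ioo a' b' →
        ‖f b' - f a'‖ ≤ C * (b' - a') := by
      intro a' b' ha' hb' hab' hd
      have hsub : Ioo a' b' \ D ⊆ Ioo a b \ insert d D := fun t ht =>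
        ⟨Ioo_subset_Ioo ha' hb' ht.1, by rintro (rfl | htD); exacts [hd ht.1, ht.2 htD]⟩
      exact ih hab' (hf.mono (Icc_subset_Icc ha' hb')) (fun t ht => hderiv t (hsub ht))
        (fun t ht => hbound t (hsub ht))
    by_cases hd : d ∈ Ioo a b
    · calc ‖f b - f a‖ ≤ ‖f b - f d‖ + ‖f d - f a‖ := norm_sub_le_norm_sub_add_norm_sub _ _ _
        _ ≤ C * (b - d) + C * (d - a) := by
          gcongr
          · exact ih' hd.1.le le_rfl hd.2.le (fun h => h.1.false)
          · exact ih' le_rfl hd.2.le hd.1.le (fun h => h.2.false)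
        _ = C * (b - a) := by ring
    · exact ih' le_rfl le_rfl hab hd

theorem lipschitzWith_of_hasDerivAt_off_finite {F : Type*} [NormedAddCommGroup F]
    [NormedSpace ℝ F] {f f' : ℝ → F} {C : NNReal} {D : Set ℝ} (hD : D.Finite)
    (hf : Continuous f) (hderiv : ∀ t ∉ D, HasDerivAt f (f' t) t)
    (hbound : ∀ t ∉ D, ‖f' t‖₊ ≤ C) :
    LipschitzWith C f := by
  have key : ∀ {a b}, a ≤ b → dist (f b) (f a) ≤ C * dist b a := fun hab => by
    simpa [dist_eq_norm, Real.dist_eq, abs_of_nonneg (sub_nonneg.2 hab)] using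
      norm_sub_le_of_hasDerivAt_off_finite hD hab hf.continuousOn (fun t ht => hderiv t ht.2)
        (fun t ht => hbound t ht.2)
  refine LipschitzWith.of_dist_le_mul fun x y => ?_
  rcases le_total x y with h | h
  · rw [dist_comm, dist_comm x]
    exact key h
  · exact key h

section LocallyConstantOffFinite

variable {u : ℝ → ℝ} {D : Set ℝ}

theorem integrableOn_Ioo_of_eventually_eq_of_disjoint
    (hu : ∀ t ∉ D, ∀ᶠ s in 𝓝 t, u s = u t) {a b : ℝ} (hab : a < b) (hD : Disjoint (Ioo a b) D) :
    IntegrableOn u (Ioo a b) := by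
  have hmid : (a + b) / 2 ∈ Ioo a b := ⟨left_lt_add_div_two.2 hab, add_div_two_lt_right.2 hab⟩
  have hconst : ∀ s ∈ Ioo a b, u s = u ((a + b) / 2) := fun s hs =>
    eq_of_germ_isConstant_on (fun t ht => ⟨u t, hu t (hD.notMem_of_mem_left ht)⟩)
      isPreconnected_Ioo hs hmid
  exact (integrableOn_const measure_Ioo_lt_top.ne).congr_fun (fun s hs => (hconst s hs).symm)
    measurableSet_Ioo

theorem locallyIntegrable_of_eventually_eq_off_finite (hD : D.Finite)
    (hu : ∀ t ∉ D, ∀ᶠ s in 𝓝 t, u s = u t) : LocallyIntegrable u := by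
  intro x
  obtain ⟨a, b, hx, hab⟩ := mem_nhds_iff_exists_Ioo_subset.1
    ((hD.sdiff (t := {x})).isClosed.compl_mem_nhds (fun h => h.2 rfl))
  have hdisj : ∀ {a' b'}, Ioo a' b' ⊆ Ioo a b → x ∉ Ioo a' b' → Disjoint (Ioo a' b') D :=
    fun hsub hx' => disjoint_left.2 fun t ht htD =>
      hab (hsub ht) ⟨htD, fun h => hx' (h ▸ ht)⟩
  refine ⟨Ioo a b, Ioo_mem_nhds hx.1 hx.2, ?_⟩
  rw [← Ioc_union_Ioo_eq_Ioo hx.1.le hx.2]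
  refine IntegrableOn.union ?_ ?_
  · exact (integrableOn_Ioc_iff_integrableOn_Ioo).2 <|
      integrableOn_Ioo_of_eventually_eq_of_disjoint hu hx.1
        (hdisj (Ioo_subset_Ioo_right hx.2.le) fun h => h.2.false)
  · exact integrableOn_Ioo_of_eventually_eq_of_disjoint hu hx.2
      (hdisj (Ioo_subset_Ioo_left hx.1.le) fun h => h.1.false)

theorem hasDerivAt_integral_of_eventually_eq (hu : LocallyIntegrable u) {t : ℝ}
    (ht : ∀ᶠ s in 𝓝 t, u s = u t) (a : ℝ) :
    HasDerivAt (fun x => ∫ τ in a..x, u τ) (u t) t :=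
  integral_hasDerivAt_right (hu.integrableOn_isCompact isCompact_uIcc).intervalIntegrable
    hu.aestronglyMeasurable.stronglyMeasurableAtFilter
    (continuousAt_const.congr (ht.mono fun _ h => h.symm))

end LocallyConstantOffFinite

theorem HasDerivAt.clm_apply_restrictScalars {F G : Type*} [NormedAddCommGroup F]
    [NormedSpace ℂ F] [NormedAddCommGroup G] [NormedSpace ℂ G] {c : ℝ → F →L[ℂ] G}
    {c' : F →L[ℂ] G} {v : ℝ → F} {v' : F} {t : ℝ} (hc : HasDerivAt c c' t)
    (hv : HasDerivAt v v' t) :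
    HasDerivAt (fun s => c s (v s)) (c' (v t) + c t v') t :=
  ((ContinuousLinearMap.restrictScalarsL ℂ F G ℝ ℝ).hasFDerivAt.comp_hasDerivAt t hc).clm_apply hv

section Operators

variable {H : Type*} [NormedAddCommGroup H]

theorem HasDerivAt.exp_smul_apply [NormedSpace ℂ H] [CompleteSpace H] (B : H →L[ℂ] H)
    {g : ℝ → ℝ} {g' : ℝ} {W : ℝ → H} {W' : H} {t : ℝ} (hg : HasDerivAt g g' t)
    (hW : HasDerivAt W W' t) :
    HasDerivAt (fun s => NormedSpace.exp (g s • B) (W s))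
      (NormedSpace.exp (g t • B) (g' • B (W t) + W')) t := by
  have hexp := (hasDerivAt_exp_smul_const B (g t)).scomp t hg
  refine (hexp.clm_apply_restrictScalars hW).congr_deriv ?_
  rw [map_add, ContinuousLinearMap.map_smul_of_tower]
  rfl

theorem norm_exp_smul_apply_of_adjoint_eq_neg [InnerProductSpace ℂ H] [CompleteSpace H]
    {B : H →L[ℂ] H} (hB : ContinuousLinearMap.adjoint B = -B) (c : ℝ) (ψ : H) :
    ‖NormedSpace.exp (c • B) ψ‖ = ‖ψ‖ := by
  have hB' : B ∈ skewAdjoint (H →L[ℂ] H) := by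
    rwa [skewAdjoint.mem_iff, ContinuousLinearMap.star_eq_adjoint]
  let +nondep : NormedAlgebra ℚ (H →L[ℂ] H) := .restrictScalars ℚ ℂ _
  have := exp_mem_unitary_of_mem_skewAdjoint (skewAdjoint.smul_mem c hB')
  exact ContinuousLinearMap.norm_map_of_mem_unitary this ψ

theorem norm_inner_exp_smul_apply_le [InnerProductSpace ℂ H] [CompleteSpace H]
    {B : H →L[ℂ] H} (hB : ContinuousLinearMap.adjoint B = -B) (A : H →L[ℂ] H) (c : ℝ)
    (φ ψ : H) : ‖inner ℂ φ (NormedSpace.exp (c • B) (A ψ))‖ ≤ ‖A‖ * ‖φ‖ * ‖ψ‖ :=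
  calc ‖inner ℂ φ (NormedSpace.exp (c • B) (A ψ))‖ ≤ ‖φ‖ * ‖A ψ‖ := by
        rw [← norm_exp_smul_apply_of_adjoint_eq_neg hB c (A ψ)]
        exact norm_inner_le_norm _ _
    _ ≤ ‖φ‖ * (‖A‖ * ‖ψ‖) := by gcongr; exact A.le_opNorm ψ
    _ = ‖A‖ * ‖φ‖ * ‖ψ‖ := by ring

end Operators

theorem abs_observable_lipschitz_general
    {H : Type*} [NormedAddCommGroup H] [InnerProductSpace ℂ H] [CompleteSpace H]
    (A B : H →L[ℂ] H)
    (hB : ContinuousLinearMap.adjoint B = -B)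
    (u : ℝ → ℝ) (D : Set ℝ) (hD : D.Finite)
    (hu : ∀ t ∉ D, ∀ᶠ s in nhds t, u s = u t)
    (Υ : ℝ → H →L[ℂ] H)
    (hΥunitary : ∀ t (ψ : H), ‖Υ t ψ‖ = ‖ψ‖)
    (hΥcont : ∀ ψ : H, Continuous fun t => Υ t ψ)
    (hode : ∀ (ψ : H), ∀ t ∉ D,
      HasDerivAt (fun s => Υ s ψ) (A (Υ t ψ) + u t • B (Υ t ψ)) t)
    (ψ₀ : H) (hψ₀ : ‖ψ₀‖ = 1) (φv : H) :
    LipschitzWith (‖A‖₊ * ‖φv‖₊)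
      (fun t : ℝ =>
        (inner ℂ φv
          (NormedSpace.exp (-(∫ τ in (0 : ℝ)..t, u τ) • B) (Υ t ψ₀)) : ℂ)) := by
  have hloc := locallyIntegrable_of_eventually_eq_off_finite hD hu
  have hY : ∀ t ∉ D,
      HasDerivAt (fun s => NormedSpace.exp (-(∫ τ in (0 : ℝ)..s, u τ) • B) (Υ s ψ₀))
        (NormedSpace.exp (-(∫ τ in (0 : ℝ)..t, u τ) • B) (A (Υ t ψ₀))) t := fun t ht => by
    refine ((hasDerivAt_integral_of_eventually_eq hloc (hu t ht) 0).neg.exp_smul_apply B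
      (hode ψ₀ t ht)).congr_deriv ?_
    rw [neg_smul, add_comm (A _), neg_add_cancel_left]
    rfl
  refine lipschitzWith_of_hasDerivAt_off_finite hD ?_
    (fun t ht => ((hasDerivAt_const t φv).inner ℂ (hY t ht)).congr_deriv
      (by rw [inner_zero_left, add_zero])) fun t _ => ?_
  · have hprim : Continuous fun t => ∫ τ in (0 : ℝ)..t, u τ := continuous_primitive
      (fun _ _ => (hloc.integrableOn_isCompact isCompact_uIcc).intervalIntegrable) 0
    exact continuous_const.inner
      (((differentiable_exp_smul_const ℝ B).continuous.comp hprim.neg).clm_apply (hΥcont ψ₀))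
  · rw [← NNReal.coe_le_coe, NNReal.coe_mul, coe_nnnorm, coe_nnnorm, coe_nnnorm]
    have := norm_inner_exp_smul_apply_le hB A (-(∫ τ in (0 : ℝ)..t, u τ)) φv (Υ t ψ₀)
    rwa [hΥunitary, hψ₀, mul_one] at this

/-- Let `A, B` be bounded skew-adjoint operators on a complex Hilbert space `H`, `u` a piecewise
constant real control, and `Υ` the (unitary) propagator of `ψ' = (A + u(t)B)ψ` with `Υ 0 = Id`.
Set `Y_t = e^{-(∫₀ᵗ u) B} ∘ Υ_t`. Then for every unit vector `ψ₀` and every vector `φv`, the map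
`t ↦ ⟨φv, Y_t ψ₀⟩` is Lipschitz with constant at most `‖A‖ ‖φv‖`. -/
theorem abs_observable_lipschitz
    {H : Type*} [NormedAddCommGroup H] [InnerProductSpace ℂ H] [CompleteSpace H]
    (A B : H →L[ℂ] H)
    (hA : ContinuousLinearMap.adjoint A = -A) (hB : ContinuousLinearMap.adjoint B = -B)
    (u : ℝ → ℝ) (D : Set ℝ) (hD : D.Finite)
    (hu : ∀ t ∉ D, ∀ᶠ s in nhds t, u s = u t)
    (Υ : ℝ → H →L[ℂ] H) (hΥ0 : Υ 0 = 1)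
    (hΥunitary : ∀ t (ψ : H), ‖Υ t ψ‖ = ‖ψ‖)
    (hΥcont : ∀ ψ : H, Continuous fun t => Υ t ψ)
    (hode : ∀ (ψ : H), ∀ t ∉ D,
      HasDerivAt (fun s => Υ s ψ) (A (Υ t ψ) + u t • B (Υ t ψ)) t)
    (ψ₀ : H) (hψ₀ : ‖ψ₀‖ = 1) (φv : H) :
    LipschitzWith (‖A‖₊ * ‖φv‖₊)
      (fun t : ℝ =>
        (inner ℂ φv
          (NormedSpace.exp (-(∫ τ in (0 : ℝ)..t, u τ) • B) (Υ t ψ₀)) : ℂ)) :=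
  abs_observable_lipschitz_general A B hB u D hD hu Υ hΥunitary hΥcont hode ψ₀ hψ₀ φv
end

section
/- Let A, B be skew-adjoint operators on a Hilbert space H generating a bilinear control system ψ' = (A + u(t)B)ψ, with B bounded. Suppose there exist unit vectors ψ₀, ψ₁ whose B-orbit closures {e^{KB}ψ₀ : K ∈ ℝ} and {e^{KB}ψ₁ : K ∈ ℝ} are at distance δ > 0, and suppose A is bounded. Then for every piecewise constant control u and every time t < δ/‖A‖, we have ‖Υᵘ_t ψ₀ − ψ₁‖ ≥ δ − t‖A‖ > 0; in particular ψ₁ is not approximately reachable from ψ₀ in time less than δ/‖A‖. -/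
/-!
Let `S` be the `B`-orbit of `ψ₀` and `f s = infDist (Υ s ψ₀) S`. On an interval where the control
is a constant `c`, conjugating the state by `exp (-(s - a) c B)` removes the drift `c B`, so the
state stays within `‖A‖ (b - a)` of `exp ((b - a) c B) (Υ a ψ₀)`; since `exp (τ B)` is unitary and
preserves `S`, this gives `f b ≤ f a + ‖A‖ (b - a)`. Chaining over the finitely many switching
times yields `f t ≤ t ‖A‖`, while `infDist ψ₁ S ≥ δ`; the triangle inequality concludes.
-/

open Set Filter Topology NormedSpace Metric

theorem IsPreconnected.apply_eq_of_eventually_eq {α β : Type*} [TopologicalSpace α] {s : Set α}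
    (hs : IsPreconnected s) {u : α → β} (hu : ∀ x ∈ s, ∀ᶠ y in 𝓝 x, u y = u x)
    {x y : α} (hx : x ∈ s) (hy : y ∈ s) : u x = u y := by
  let _ : TopologicalSpace β := ⊥
  have : DiscreteTopology β := ⟨rfl⟩
  refine hs.constant (fun z hz => ContinuousAt.continuousWithinAt ?_) hx hy
  rw [ContinuousAt, nhds_discrete β]
  exact tendsto_pure.2 (hu z hz)

theorem Set.Finite.antitone_of_lt_of_disjoint_Ioo {α β : Type*} [LinearOrder α] [Preorder β]
    {g : α → β} {D : Set α} (hD : D.Finite)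
    (h : ∀ a b, a < b → Disjoint (Ioo a b) D → g b ≤ g a) : Antitone g := by
  induction D, hD using Set.Finite.induction_on with
  | empty => exact antitone_iff_forall_lt.2 fun a b hab => h a b hab (disjoint_empty _)
  | @insert d D _ _ ih =>
    refine ih fun a b hab hdisj => ?_
    by_cases hd : d ∈ Ioo a b
    · have hleft : Disjoint (Ioo a d) (insert d D) := disjoint_insert_right.2
        ⟨fun h' => h'.2.false, hdisj.mono_left (Ioo_subset_Ioo_right hd.2.le)⟩
      have hright : Disjoint (Ioo d b) (insert d D) := disjoint_insert_right.2
        ⟨fun h' => h'.1.false, hdisj.mono_left (Ioo_subset_Ioo_left hd.1.le)⟩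
      exact (h d b hd.2 hright).trans (h a d hd.1 hleft)
    · exact h a b hab (disjoint_insert_right.2 ⟨hd, hdisj⟩)

theorem norm_image_sub_le_of_norm_hasDerivAt_le_Ioo {E : Type*} [NormedAddCommGroup E]
    [NormedSpace ℝ E] {f f' : ℝ → E} {C a b : ℝ} (hab : a ≤ b) (hf : ContinuousOn f (Icc a b))
    (hderiv : ∀ x ∈ Ioo a b, HasDerivAt f (f' x) x) (hbound : ∀ x ∈ Ioo a b, ‖f' x‖ ≤ C) :
    ‖f b - f a‖ ≤ C * (b - a) := by
  rcases hab.eq_or_lt with rfl | hlt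
  · simp
  have hIoo : ∀ x ∈ Ioo a b, ‖f b - f x‖ ≤ C * (b - x) := fun x hx =>
    norm_image_sub_le_of_norm_deriv_right_le_segment (hf.mono (Icc_subset_Icc_left hx.1.le))
      (fun y hy => (hderiv y ⟨hx.1.trans_le hy.1, hy.2⟩).hasDerivWithinAt)
      (fun y hy => hbound y ⟨hx.1.trans_le hy.1, hy.2⟩) b (right_mem_Icc.2 hx.2.le)
  have hfa : ContinuousWithinAt f (Ioo a b) a :=
    (hf a (left_mem_Icc.2 hab)).mono Ioo_subset_Icc_self
  refine ContinuousWithinAt.closure_le (by simp [closure_Ioo hlt.ne, hab]) ?_ ?_ hIoo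
  · exact (continuousWithinAt_const.sub hfa).norm
  · fun_prop

section Orbit

variable {H : Type*} [NormedAddCommGroup H] [NormedSpace ℂ H] {B : H →L[ℂ] H}

theorem exp_add_smul [CompleteSpace H] (B : H →L[ℂ] H) (s t : ℝ) :
    exp ((s + t) • B) = exp (s • B) * exp (t • B) := by
  let +nondep : NormedAlgebra ℚ (H →L[ℂ] H) := .restrictScalars ℚ ℂ _
  rw [add_smul, exp_add_of_commute ((Commute.refl B).smul_left s |>.smul_right t)]

def expOrbit (B : H →L[ℂ] H) (v : H) : Set H :=
  {x | ∃ K : ℝ, x = exp (K • B) v}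

theorem self_mem_expOrbit (B : H →L[ℂ] H) (v : H) : v ∈ expOrbit B v :=
  ⟨0, by simp⟩

theorem exp_smul_apply_mem_expOrbit [CompleteSpace H] {v w : H} (τ : ℝ) (hw : w ∈ expOrbit B v) :
    exp (τ • B) w ∈ expOrbit B v := by
  obtain ⟨K, rfl⟩ := hw
  exact ⟨τ + K, by rw [exp_add_smul, mul_apply_eq_comp]⟩

end Orbit

section SkewAdjoint

variable {H : Type*} [NormedAddCommGroup H] [InnerProductSpace ℂ H] [CompleteSpace H]
  {B : H →L[ℂ] H} (hB : ContinuousLinearMap.adjoint B = -B)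
include hB

theorem norm_exp_smul_apply (τ : ℝ) (v : H) : ‖exp (τ • B) v‖ = ‖v‖ := by
  have hskew : B ∈ skewAdjoint (H →L[ℂ] H) := by
    rwa [skewAdjoint.mem_iff, ContinuousLinearMap.star_eq_adjoint]
  have hunitary : exp (τ • B) ∈ unitary (H →L[ℂ] H) :=
    let +nondep : NormedAlgebra ℚ (H →L[ℂ] H) := .restrictScalars ℚ ℂ _
    exp_mem_unitary_of_mem_skewAdjoint (skewAdjoint.smul_mem τ hskew)
  exact ContinuousLinearMap.norm_map_of_mem_unitary hunitary v

theorem infDist_exp_smul_apply_expOrbit_le (τ : ℝ) (v w : H) :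
    infDist (exp (τ • B) w) (expOrbit B v) ≤ infDist w (expOrbit B v) := by
  set E : H →L[ℂ] H := exp (τ • B)
  have hiso : Isometry E := AddMonoidHomClass.isometry_of_norm E (norm_exp_smul_apply hB τ)
  calc infDist (E w) (expOrbit B v)
      ≤ infDist (E w) (E '' expOrbit B v) :=
        infDist_le_infDist_of_subset (image_subset_iff.2 fun _ => exp_smul_apply_mem_expOrbit τ)
          ((nonempty_of_mem (self_mem_expOrbit B v)).image _)
    _ = infDist w (expOrbit B v) := infDist_image hiso

/-- Duhamel estimate for `x' = F + c B x`: in the interaction picture `exp (-(s - a) c B) (x s)`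
only the forcing `F` is left, and the conjugation is unitary. -/
theorem norm_sub_exp_smul_apply_le {x F : ℝ → H} {a b c M : ℝ} (hab : a ≤ b)
    (hx : ContinuousOn x (Icc a b))
    (hderiv : ∀ s ∈ Ioo a b, HasDerivAt x (F s + c • B (x s)) s)
    (hF : ∀ s ∈ Ioo a b, ‖F s‖ ≤ M) :
    ‖x b - exp (((b - a) * c) • B) (x a)‖ ≤ M * (b - a) := by
  set U : ℝ → H →L[ℂ] H := fun s => exp (((a - s) * c) • B)
  have hU : ∀ s, HasDerivAt U ((-c) • (U s * B)) s := by
    intro s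
    have := (hasDerivAt_exp_smul_const (𝕂 := ℝ) B ((a - s) * c)).scomp s
      (((hasDerivAt_id s).const_sub a).mul_const c)
    simpa [Function.comp_def] using this
  have hy : ∀ s ∈ Ioo a b, HasDerivAt (fun s => U s (x s)) (U s (F s)) s := by
    intro s hs
    have hUℝ :=
      (ContinuousLinearMap.restrictScalarsL ℂ H H ℝ ℝ).hasFDerivAt.comp_hasDerivAt s (hU s)
    convert hUℝ.clm_apply (hderiv s hs) using 1
    · rfl
    · simp [ContinuousLinearMap.map_smul_of_tower]
  have hycont : ContinuousOn (fun s => U s (x s)) (Icc a b) :=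
    (continuous_iff_continuousAt.2 fun s => (hU s).continuousAt).continuousOn.clm_apply hx
  have hUa : U a = 1 := by simp only [U, sub_self, zero_mul, zero_smul, exp_zero]
  have hUb : exp (((b - a) * c) • B) * U b = 1 := by
    rw [← exp_add_smul, show (b - a) * c + (a - b) * c = 0 by ring, zero_smul, exp_zero]
  calc ‖x b - exp (((b - a) * c) • B) (x a)‖
      = ‖exp (((b - a) * c) • B) (U b (x b) - U a (x a))‖ := by
        rw [map_sub, ← mul_apply_eq_comp, hUb, hUa]; rfl
    _ = ‖U b (x b) - U a (x a)‖ := norm_exp_smul_apply hB _ _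
    _ ≤ M * (b - a) := norm_image_sub_le_of_norm_hasDerivAt_le_Ioo hab hycont hy
        fun s hs => (norm_exp_smul_apply hB _ _).trans_le (hF s hs)

theorem infDist_expOrbit_le_of_hasDerivAt {x F : ℝ → H} {a b c M : ℝ} (hab : a ≤ b)
    (hx : ContinuousOn x (Icc a b))
    (hderiv : ∀ s ∈ Ioo a b, HasDerivAt x (F s + c • B (x s)) s)
    (hF : ∀ s ∈ Ioo a b, ‖F s‖ ≤ M) (v : H) :
    infDist (x b) (expOrbit B v) ≤ infDist (x a) (expOrbit B v) + M * (b - a) := by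
  set E : H →L[ℂ] H := exp (((b - a) * c) • B)
  calc infDist (x b) (expOrbit B v)
      ≤ infDist (E (x a)) (expOrbit B v) + dist (x b) (E (x a)) :=
        infDist_le_infDist_add_dist
    _ ≤ infDist (x a) (expOrbit B v) + M * (b - a) := by
        gcongr
        · exact infDist_exp_smul_apply_expOrbit_le hB _ v (x a)
        · rw [dist_eq_norm]
          exact norm_sub_exp_smul_apply_le hB hab hx hderiv hF

end SkewAdjoint

theorem not_reachable_in_small_time_general
    {H : Type*} [NormedAddCommGroup H] [InnerProductSpace ℂ H] [CompleteSpace H]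
    (A B : H →L[ℂ] H)
    (hB : ContinuousLinearMap.adjoint B = -B)
    (u : ℝ → ℝ) (D : Set ℝ) (hD : D.Finite)
    (hu : ∀ t ∉ D, ∀ᶠ s in nhds t, u s = u t)
    (Υ : ℝ → H →L[ℂ] H) (hΥ0 : Υ 0 = 1)
    (hΥunitary : ∀ t (ψ : H), ‖Υ t ψ‖ = ‖ψ‖)
    (hΥcont : ∀ ψ : H, Continuous fun t => Υ t ψ)
    (hode : ∀ (ψ : H), ∀ t ∉ D,
      HasDerivAt (fun s => Υ s ψ) (A (Υ t ψ) + u t • B (Υ t ψ)) t)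
    (ψ₀ ψ₁ : H) (hψ₀ : ‖ψ₀‖ = 1)
    (δ : ℝ)
    (hdist : ∀ x ∈ closure {x : H | ∃ K : ℝ, x = NormedSpace.exp (K • B) ψ₀},
      ∀ y ∈ closure {y : H | ∃ K : ℝ, y = NormedSpace.exp (K • B) ψ₁}, δ ≤ ‖x - y‖) :
    ∀ t : ℝ, 0 ≤ t → t * ‖A‖ < δ →
      δ - t * ‖A‖ ≤ ‖Υ t ψ₀ - ψ₁‖ ∧ 0 < ‖Υ t ψ₀ - ψ₁‖ := by
  intro t ht htA
  set S := expOrbit B ψ₀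
  have hstep : ∀ a b, a < b → Disjoint (Ioo a b) D →
      infDist (Υ b ψ₀) S - ‖A‖ * b ≤ infDist (Υ a ψ₀) S - ‖A‖ * a := by
    intro a b hab hdisj
    have hmid : (a + b) / 2 ∈ Ioo a b := ⟨by linarith, by linarith⟩
    have hconst : ∀ s ∈ Ioo a b, u s = u ((a + b) / 2) := fun s hs =>
      isPreconnected_Ioo.apply_eq_of_eventually_eq
        (fun y hy => hu y (hdisj.notMem_of_mem_left hy)) hs hmid
    have hgrowth := infDist_expOrbit_le_of_hasDerivAt hB hab.le (hΥcont ψ₀).continuousOn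
      (fun s hs => hconst s hs ▸ hode ψ₀ s (hdisj.notMem_of_mem_left hs))
      (fun s _ => (A.le_opNorm _).trans_eq (by rw [hΥunitary, hψ₀, mul_one])) ψ₀
    linarith
  have hdecay := hD.antitone_of_lt_of_disjoint_Ioo hstep ht
  have hstart : infDist (Υ 0 ψ₀) S = 0 := by
    rw [hΥ0]; exact infDist_zero_of_mem (self_mem_expOrbit B ψ₀)
  have hfar : δ ≤ infDist ψ₁ S := (le_infDist ⟨ψ₀, self_mem_expOrbit B ψ₀⟩).2 fun y hy => by
    rw [dist_comm, dist_eq_norm]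
    exact hdist y (subset_closure hy) ψ₁ (subset_closure (self_mem_expOrbit B ψ₁))
  have htri := infDist_le_infDist_add_dist (x := ψ₁) (y := Υ t ψ₀) (s := S)
  rw [dist_comm, dist_eq_norm] at htri
  constructor <;> linarith

/-- If the `B`-orbit closures of two unit vectors `ψ₀, ψ₁` are at distance at least `δ > 0` and
`A` is bounded, then for every piecewise constant control `u` and every time `0 ≤ t` with
`t ‖A‖ < δ`, one has `‖Υᵘ_t ψ₀ - ψ₁‖ ≥ δ - t ‖A‖ > 0`: `ψ₁` is not approximately reachable from
`ψ₀` in time less than `δ / ‖A‖`. -/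
theorem not_reachable_in_small_time
    {H : Type*} [NormedAddCommGroup H] [InnerProductSpace ℂ H] [CompleteSpace H]
    (A B : H →L[ℂ] H)
    (hA : ContinuousLinearMap.adjoint A = -A) (hB : ContinuousLinearMap.adjoint B = -B)
    (u : ℝ → ℝ) (D : Set ℝ) (hD : D.Finite)
    (hu : ∀ t ∉ D, ∀ᶠ s in nhds t, u s = u t)
    (Υ : ℝ → H →L[ℂ] H) (hΥ0 : Υ 0 = 1)
    (hΥunitary : ∀ t (ψ : H), ‖Υ t ψ‖ = ‖ψ‖)
    (hΥcont : ∀ ψ : H, Continuous fun t => Υ t ψ)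
    (hode : ∀ (ψ : H), ∀ t ∉ D,
      HasDerivAt (fun s => Υ s ψ) (A (Υ t ψ) + u t • B (Υ t ψ)) t)
    (ψ₀ ψ₁ : H) (hψ₀ : ‖ψ₀‖ = 1) (hψ₁ : ‖ψ₁‖ = 1)
    (δ : ℝ) (hδpos : 0 < δ)
    (hdist : ∀ x ∈ closure {x : H | ∃ K : ℝ, x = NormedSpace.exp (K • B) ψ₀},
      ∀ y ∈ closure {y : H | ∃ K : ℝ, y = NormedSpace.exp (K • B) ψ₁}, δ ≤ ‖x - y‖) :
    ∀ t : ℝ, 0 ≤ t → t * ‖A‖ < δ →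
      δ - t * ‖A‖ ≤ ‖Υ t ψ₀ - ψ₁‖ ∧ 0 < ‖Υ t ψ₀ - ψ₁‖ :=
  not_reachable_in_small_time_general A B hB u D hD hu Υ hΥ0 hΥunitary hΥcont hode ψ₀ ψ₁ hψ₀ δ hdist
end

section
/- Let B be a bounded skew-adjoint operator on a Hilbert space H, ψ₀ ∈ H a unit vector, K ∈ ℝ, and for η > 0 let u_η be the control equal to the constant K/η on [0, η] and 0 elsewhere. Then the solution at time η of ψ' = (A + u_η(t)B)ψ restricted to a finite-dimensional invariant subspace (the Galerkin approximation of order N) converges to e^{KB}π_N ψ₀ as η → 0⁺, where π_N is the orthogonal projection onto the span of the first N eigenvectors of A. -/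
open Complex NormedSpace Filter Topology

/-! On `[0, η]` the propagator is `exp (η (A⁽ᴺ⁾ + (K/η) B⁽ᴺ⁾)) = exp (η A⁽ᴺ⁾ + K B⁽ᴺ⁾)`: the drift
`η A⁽ᴺ⁾` vanishes as `η → 0⁺`, while the impulse `K B⁽ᴺ⁾` does not depend on `η`, so the claim
follows from the continuity of the exponential. -/

theorem smul_add_div_smul {𝕜 E : Type*} [Field 𝕜] [AddCommGroup E] [Module 𝕜 E] {t : 𝕜}
    (ht : t ≠ 0) (a b : E) (c : 𝕜) : t • (a + (c / t) • b) = t • a + c • b := by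
  rw [smul_add, smul_smul, mul_div_cancel₀ c ht]

theorem tendsto_exp_smul_add_nhds_zero {𝕂 𝔸 : Type*} [RCLike 𝕂] [NormedRing 𝔸]
    [NormedAlgebra 𝕂 𝔸] [CompleteSpace 𝔸] (a b : 𝔸) :
    Tendsto (fun t : 𝕂 => exp (t • a + b)) (𝓝 0) (𝓝 (exp b)) := by
  have hlin : Tendsto (fun t : 𝕂 => t • a + b) (𝓝 0) (𝓝 b) := by
    have hcont : Continuous fun t : 𝕂 => t • a + b := by fun_prop
    simpa using hcont.tendsto 0
  exact (exp_analytic (𝕂 := 𝕂) b).continuousAt.tendsto.comp hlin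

theorem galerkin_impulse_limit_general
    {H : Type*} [NormedAddCommGroup H] [InnerProductSpace ℂ H] [CompleteSpace H]
    (A B : H →L[ℂ] H)
    (πN : H →L[ℂ] H)
    (ψ₀ : H) (K : ℝ)
    (X : ℝ → ℝ → H →L[ℂ] H)
    (hX : ∀ η : ℝ, 0 < η → ∀ t ∈ Set.Icc (0 : ℝ) η,
      X η t = NormedSpace.exp
        ((t : ℂ) • ((πN ∘L A ∘L πN) + (K / η : ℂ) • (πN ∘L B ∘L πN)))) :
    Tendsto (fun η : ℝ => X η η (πN ψ₀)) (nhdsWithin 0 (Set.Ioi 0))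
      (nhds (NormedSpace.exp ((K : ℂ) • (πN ∘L B ∘L πN)) (πN ψ₀))) := by
  have hofReal : Tendsto (fun η : ℝ => (η : ℂ)) (𝓝[>] 0) (𝓝 0) :=
    (continuous_ofReal.tendsto' 0 0 ofReal_zero).mono_left nhdsWithin_le_nhds
  have hexp := (tendsto_exp_smul_add_nhds_zero (πN ∘L A ∘L πN) ((K : ℂ) • (πN ∘L B ∘L πN))).comp
    hofReal
  refine (((ContinuousLinearMap.apply ℂ H (πN ψ₀)).continuous.tendsto _).comp hexp).congr' ?_
  filter_upwards [self_mem_nhdsWithin] with η (hη : 0 < η)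
  rw [hX η hη η ⟨hη.le, le_rfl⟩, smul_add_div_smul (ofReal_ne_zero.2 hη.ne')]
  rfl

/-- Galerkin limit of impulsive controls: let `A` be skew-adjoint with orthonormal eigenvectors
`φ`, `πN` the orthogonal projection onto the span `L` of the first `N` eigenvectors, and let
`A^{(N)} = πN A πN`, `B^{(N)} = πN B πN` be the compressions. For `η > 0` let `u_η` be the
control equal to `K/η` on `[0, η]` and `0` elsewhere, with propagator `X η` of
`x' = (A^{(N)} + u_η(t) B^{(N)}) x` (so `X η t = exp(t(A^{(N)} + (K/η)B^{(N)}))` on `[0, η]`).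
Then `X η η (πN ψ₀) → exp(K B^{(N)}) (πN ψ₀)` as `η → 0⁺`. -/
theorem galerkin_impulse_limit
    {H : Type*} [NormedAddCommGroup H] [InnerProductSpace ℂ H] [CompleteSpace H]
    (A B : H →L[ℂ] H)
    (hA : ContinuousLinearMap.adjoint A = -A) (hB : ContinuousLinearMap.adjoint B = -B)
    (φ : ℕ → H) (hφ : Orthonormal ℂ φ)
    (lam : ℕ → ℝ) (heig : ∀ k : ℕ, A (φ k) = ((Complex.I * lam k : ℂ)) • φ k)
    (N : ℕ) (πN : H →L[ℂ] H)
    (hπ : ∀ x : H, πN x ∈ Submodule.span ℂ (Set.range fun i : Fin N => φ i) ∧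
      x - πN x ∈ (Submodule.span ℂ (Set.range fun i : Fin N => φ i))ᗮ)
    (ψ₀ : H) (hψ₀ : ‖ψ₀‖ = 1) (K : ℝ)
    (X : ℝ → ℝ → H →L[ℂ] H)
    (hX : ∀ η : ℝ, 0 < η → ∀ t ∈ Set.Icc (0 : ℝ) η,
      X η t = NormedSpace.exp
        ((t : ℂ) • ((πN ∘L A ∘L πN) + (K / η : ℂ) • (πN ∘L B ∘L πN)))) :
    Tendsto (fun η : ℝ => X η η (πN ψ₀)) (nhdsWithin 0 (Set.Ioi 0))
      (nhds (NormedSpace.exp ((K : ℂ) • (πN ∘L B ∘L πN)) (πN ψ₀))) :=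
  galerkin_impulse_limit_general A B πN ψ₀ K X hX
end
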